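/- arXiv:1112.3689 — 5 statements merged into one kernel-verified Lean document; each statement's English description precedes it below -/
import Mathlib

section
/- The function h(x) = x + x^2(1 - e^{1/x}) is strictly increasing on (0, ∞). -/
/-! With `t = 1 / x` one gets `h'(x) = x * G t` for `G t = t + 2 + (t - 2) * exp t`.
Now `G 0 = 0` and `G' t = 1 + (t - 1) * exp t`, which is positive for `t ≠ 0` because
`1 - t < exp (-t)`; so `G` is positive on `(0, ∞)`, and so is `h'`. -/

open Real Set

lemma one_add_sub_one_mul_exp_pos {t : ℝ} (ht : t ≠ 0) : 0 < 1 + (t - 1) * exp t := by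
  have hexp : -t + 1 < exp (-t) := add_one_lt_exp (neg_ne_zero.2 ht)
  have hlt : (1 - t) * exp t < 1 := by
    calc (1 - t) * exp t < exp (-t) * exp t := by gcongr; linarith
      _ = 1 := by rw [← exp_add, neg_add_cancel, exp_zero]
  linarith

lemma hasDerivAt_add_two_add_sub_two_mul_exp (t : ℝ) :
    HasDerivAt (fun t : ℝ => t + 2 + (t - 2) * exp t) (1 + (t - 1) * exp t) t := by
  refine (((hasDerivAt_id' t).add_const 2).add
    (((hasDerivAt_id' t).sub_const 2).mul (hasDerivAt_exp t))).congr_deriv ?_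
  ring

lemma add_two_add_sub_two_mul_exp_pos {t : ℝ} (ht : 0 < t) :
    0 < t + 2 + (t - 2) * exp t := by
  have hmono : StrictMonoOn (fun t : ℝ => t + 2 + (t - 2) * exp t) (Ici 0) := by
    refine strictMonoOn_of_deriv_pos (convex_Ici 0) ?_ fun s hs => ?_
    · exact fun s _ => (hasDerivAt_add_two_add_sub_two_mul_exp s).continuousAt.continuousWithinAt
    · rw [interior_Ici] at hs
      rw [(hasDerivAt_add_two_add_sub_two_mul_exp s).deriv]
      exact one_add_sub_one_mul_exp_pos (ne_of_gt hs)
  simpa using hmono self_mem_Ici ht.le ht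

lemma hasDerivAt_add_sq_mul_one_sub_exp_inv {x : ℝ} (hx : x ≠ 0) :
    HasDerivAt (fun x : ℝ => x + x ^ 2 * (1 - exp (1 / x)))
      (x * (1 / x + 2 + (1 / x - 2) * exp (1 / x))) x := by
  have hinv : HasDerivAt (fun y : ℝ => 1 / y) (-(x ^ 2)⁻¹) x := by
    simpa only [one_div] using hasDerivAt_inv hx
  refine ((hasDerivAt_id' x).add ((hasDerivAt_pow 2 x).mul (hinv.exp.const_sub 1))).congr_deriv ?_
  field_simp
  ring

theorem h_strictMonoOn :
    StrictMonoOn (fun x : ℝ => x + x ^ 2 * (1 - Real.exp (1 / x))) (Set.Ioi 0) := by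
  refine strictMonoOn_of_deriv_pos (convex_Ioi 0) ?_ fun x hx => ?_
  · exact fun x hx =>
      (hasDerivAt_add_sq_mul_one_sub_exp_inv (ne_of_gt hx)).continuousAt.continuousWithinAt
  · rw [interior_Ioi] at hx
    rw [(hasDerivAt_add_sq_mul_one_sub_exp_inv (ne_of_gt hx)).deriv]
    exact mul_pos hx (add_two_add_sub_two_mul_exp_pos (one_div_pos.2 hx))
end

section
/- For fixed y > 1, the function a ↦ y^{√a} · e^{−a(y^{1/√a} − 1)} is strictly increasing on (0, ∞). -/
/-! With `L = log y` and `x = √a / L`, the function equals `exp (L ^ 2 * h x)` where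
`h x = x + x ^ 2 * (1 - exp x⁻¹)`. Putting `u = x⁻¹`, one has
`u * h' x = u * (1 + exp u) - 2 * (exp u - 1)`, which vanishes at `u = 0` and has derivative
`1 - exp u + u * exp u = exp u * (exp (-u) - (1 - u)) > 0`; hence `h` is strictly increasing. -/

open Real Set

lemma one_sub_exp_add_mul_exp_pos {u : ℝ} (hu : 0 < u) : 0 < 1 - exp u + u * exp u := by
  have h := add_one_lt_exp (x := -u) (by linarith)
  have h2 : exp (-u) * exp u = 1 := by rw [← exp_add]; simp
  nlinarith [exp_pos u, exp_pos (-u)]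

lemma two_mul_exp_sub_one_lt {u : ℝ} (hu : 0 < u) : 2 * (exp u - 1) < u * (1 + exp u) := by
  set φ : ℝ → ℝ := fun v => v * (1 + exp v) - 2 * (exp v - 1)
  have hφ : ∀ v, HasDerivAt φ (1 - exp v + v * exp v) v := fun v => by
    refine (((hasDerivAt_id v).mul ((hasDerivAt_exp v).const_add 1)).sub
      (((hasDerivAt_exp v).sub_const 1).const_mul 2)).congr_deriv ?_
    simp only [id]
    ring
  have hmono : StrictMonoOn φ (Ici 0) := by
    refine strictMonoOn_of_deriv_pos (convex_Ici 0)
      (fun v _ => (hφ v).continuousAt.continuousWithinAt) fun v hv => ?_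
    rw [interior_Ici] at hv
    rw [(hφ v).deriv]
    exact one_sub_exp_add_mul_exp_pos hv
  have := hmono self_mem_Ici (mem_Ici.2 hu.le) hu
  simp only [φ, exp_zero] at this
  linarith

noncomputable def tailExponent (x : ℝ) : ℝ := x + x ^ 2 * (1 - exp x⁻¹)

lemma hasDerivAt_tailExponent {x : ℝ} (hx : x ≠ 0) :
    HasDerivAt tailExponent (1 + exp x⁻¹ - 2 * x * (exp x⁻¹ - 1)) x := by
  have hexp := ((hasDerivAt_inv hx).exp).const_sub 1
  refine ((hasDerivAt_id x).add ((hasDerivAt_pow 2 x).mul hexp)).congr_deriv ?_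
  field_simp
  ring

lemma tailExponent_strictMonoOn : StrictMonoOn tailExponent (Ioi 0) := by
  refine strictMonoOn_of_deriv_pos (convex_Ioi 0)
    (fun x hx => (hasDerivAt_tailExponent (ne_of_gt hx)).continuousAt.continuousWithinAt)
    fun x hx => ?_
  rw [interior_Ioi, mem_Ioi] at hx
  rw [(hasDerivAt_tailExponent hx.ne').deriv]
  have key := mul_lt_mul_of_pos_left (two_mul_exp_sub_one_lt (inv_pos.2 hx)) hx
  rw [mul_inv_cancel_left₀ hx.ne'] at key
  linarith

lemma rpow_sqrt_mul_exp_eq_exp_tailExponent {y a : ℝ} (hy : 1 < y) (ha : 0 < a) :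
    y ^ √a * exp (-a * (y ^ (1 / √a) - 1)) = exp (log y ^ 2 * tailExponent (√a / log y)) := by
  have hL : log y ≠ 0 := (log_pos hy).ne'
  have hs : √a ≠ 0 := (sqrt_pos.2 ha).ne'
  rw [rpow_def_of_pos (by linarith), rpow_def_of_pos (by linarith), ← exp_add, tailExponent,
    inv_div]
  congr 1
  field_simp
  linear_combination (exp (log y / √a) - 1) * sq_sqrt ha.le

theorem tail_strictMono_in_a (y : ℝ) (hy : 1 < y) :
    StrictMonoOn
      (fun a : ℝ => y ^ Real.sqrt a * Real.exp (-a * (y ^ (1 / Real.sqrt a) - 1)))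
      (Set.Ioi 0) := by
  have hL := log_pos hy
  intro a ha b hb hab
  have hx : ∀ {c : ℝ}, c ∈ Ioi 0 → √c / log y ∈ Ioi 0 :=
    fun hc => div_pos (sqrt_pos.2 hc) hL
  simp only [rpow_sqrt_mul_exp_eq_exp_tailExponent hy ha,
    rpow_sqrt_mul_exp_eq_exp_tailExponent hy hb, exp_lt_exp]
  exact mul_lt_mul_of_pos_left (tailExponent_strictMonoOn (hx ha) (hx hb)
    (div_lt_div_of_pos_right (sqrt_lt_sqrt (le_of_lt ha) hab) hL)) (pow_pos hL 2)
end

section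
/- For β > 0, the function a ↦ ∫_0^∞ (1+t)^{a+β√a} · (a t/(1+t)) · e^{−a t} dt is strictly increasing on (0, ∞). Equivalently, the Erlang C formula C(a+β√a, a) is strictly decreasing in a for fixed β > 0. -/
/-!
Put `a = x ^ 2`. The substitution `1 + t = exp (w / x)` turns the integral into
`∫₀^∞ x (exp (w / x) - 1) Φₓ(w) dw` with `Φₓ(w) = exp (β w + x w - x ^ 2 (exp (w / x) - 1))`.
Since `Φₓ' = (β + x - x exp (w / x)) Φₓ`, `Φₓ(0) = 1` and `Φₓ(∞) = 0`, this equals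
`1 + β ∫₀^∞ Φₓ`. For fixed `w > 0` the exponent `x w - x ^ 2 (exp (w / x) - 1)` is strictly
increasing in `x`: its `x`-derivative is `x (u + 2 + eᵘ (u - 2))` with `u = w / x > 0`, and
`u + 2 + eᵘ (u - 2)` vanishes at `0` with derivative `1 - (1 - u) eᵘ > 0`. Hence `∫ Φₓ` strictly
increases with `x = √a`.
-/

open MeasureTheory Real Set Filter

lemma one_sub_mul_exp_lt_one {u : ℝ} (hu : u ≠ 0) : (1 - u) * exp u < 1 := by
  have h := mul_lt_mul_of_pos_right (add_one_lt_exp (neg_ne_zero.2 hu)) (exp_pos u)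
  rwa [← exp_add, neg_add_cancel, exp_zero, neg_add_eq_sub] at h

lemma add_two_add_exp_mul_sub_two_pos {u : ℝ} (hu : 0 < u) : 0 < u + 2 + exp u * (u - 2) := by
  have hderiv (v : ℝ) :
      HasDerivAt (fun v ↦ v + 2 + exp v * (v - 2)) (1 + exp v * (v - 1)) v := by
    refine (((hasDerivAt_id v).add_const 2).add
      ((hasDerivAt_exp v).mul ((hasDerivAt_id v).sub_const 2))).congr_deriv ?_
    simp only [id]; ring
  have hmono : StrictMonoOn (fun v ↦ v + 2 + exp v * (v - 2)) (Ici 0) := by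
    refine strictMonoOn_of_hasDerivWithinAt_pos (convex_Ici 0) (by fun_prop)
      (fun v _ ↦ (hderiv v).hasDerivWithinAt) fun v hv ↦ ?_
    rw [interior_Ici] at hv
    linarith [one_sub_mul_exp_lt_one hv.out.ne']
  simpa using hmono self_mem_Ici hu.le hu

lemma integrable_exp_mul_sub_sq_div_two (b : ℝ) :
    Integrable (fun w ↦ exp (b * w - w ^ 2 / 2)) := by
  refine (integrable_cexp_quadratic' (b := -1 / 2) (by norm_num) b 0).norm.congr
    (ae_of_all _ fun w ↦ ?_)
  simp only [Complex.norm_exp]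
  congr 1
  simp [← Complex.ofReal_pow]
  ring

lemma tendsto_exp_mul_sub_sq_div_two (b : ℝ) :
    Tendsto (fun w ↦ exp (b * w - w ^ 2 / 2)) atTop (nhds 0) := by
  have := rexp_neg_quadratic_isLittleO_rpow_atTop (a := -1 / 2) (by norm_num) b 0
  simp only [rpow_zero, Asymptotics.isLittleO_one_iff] at this
  convert this using 3; ring

lemma setIntegral_lt_setIntegral {α : Type*} [MeasurableSpace α] {μ : Measure α} {s : Set α}
    {f g : α → ℝ} (hs : MeasurableSet s) (hμs : μ s ≠ 0) (hf : IntegrableOn f s μ)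
    (hg : IntegrableOn g s μ) (hlt : ∀ x ∈ s, f x < g x) :
    ∫ x in s, f x ∂μ < ∫ x in s, g x ∂μ := by
  rw [← sub_pos, ← integral_sub hg hf, setIntegral_pos_iff_support_of_nonneg_ae
    ((ae_restrict_iff' hs).2 (.of_forall fun x hx ↦ (sub_pos.2 (hlt x hx)).le)) (hg.sub hf)]
  have hsupp : (Function.support fun x ↦ g x - f x) ∩ s = s :=
    inter_eq_right.2 fun x hx ↦ (sub_pos.2 (hlt x hx)).ne'
  rw [hsupp]
  exact pos_iff_ne_zero.2 hμs

lemma integral_comp_exp_div_sub_one_Ioi {E : Type*} [NormedAddCommGroup E] [NormedSpace ℝ E]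
    (g : ℝ → E) {x : ℝ} (hx : 0 < x) :
    ∫ w in Ioi 0, (x⁻¹ * exp (w / x)) • g (exp (w / x) - 1) = ∫ t in Ioi 0, g t := by
  set φ : ℝ → ℝ := fun w ↦ exp (w / x) - 1
  have hmono : StrictMono φ := fun a b hab ↦ by
    simp only [φ]; gcongr
  have htop : Tendsto φ atTop atTop :=
    tendsto_atTop_add_const_right _ _ (tendsto_exp_atTop.comp (tendsto_id.atTop_div_const hx))
  have himg : φ '' Ioi 0 = Ioi 0 := by
    rw [(by fun_prop : Continuous φ).continuousOn.image_Ioi_of_strictMonoOn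
      (hmono.strictMonoOn _) htop]
    simp [φ]
  have hderiv (w : ℝ) : HasDerivAt φ (x⁻¹ * exp (w / x)) w := by
    refine (((hasDerivAt_id w).div_const x).exp.sub_const 1).congr_deriv ?_
    simp only [id]; ring
  have hsubst := integral_image_eq_integral_abs_deriv_smul (measurableSet_Ioi (a := 0))
    (fun w _ ↦ (hderiv w).hasDerivWithinAt) hmono.injective.injOn g
  rw [himg] at hsubst
  rw [hsubst]
  refine setIntegral_congr_fun measurableSet_Ioi fun w _ ↦ ?_
  rw [abs_of_pos (by positivity : 0 < x⁻¹ * exp (w / x))]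

noncomputable def erlangExponent (x w : ℝ) : ℝ := x * w - x ^ 2 * (exp (w / x) - 1)

lemma hasDerivAt_erlangExponent_left {x : ℝ} (w : ℝ) (hx : x ≠ 0) :
    HasDerivAt (fun x ↦ erlangExponent x w)
      (x * (w / x + 2 + exp (w / x) * (w / x - 2))) x := by
  have hdiv : HasDerivAt (fun x ↦ w / x) (-(w / x ^ 2)) x := by
    simpa [div_eq_mul_inv, neg_div] using (hasDerivAt_inv hx).const_mul w
  refine (((hasDerivAt_id x).mul_const w).sub ((hasDerivAt_pow 2 x).mul
    (hdiv.exp.sub_const 1))).congr_deriv ?_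
  field_simp
  ring

lemma strictMonoOn_erlangExponent_left {w : ℝ} (hw : 0 < w) :
    StrictMonoOn (fun x ↦ erlangExponent x w) (Ioi 0) := by
  refine strictMonoOn_of_hasDerivWithinAt_pos (convex_Ioi 0)
    (f' := fun x ↦ x * (w / x + 2 + exp (w / x) * (w / x - 2))) ?_ (fun x hx ↦ ?_)
    fun x hx ↦ ?_
  · exact fun x hx ↦
      (hasDerivAt_erlangExponent_left w hx.out.ne').continuousAt.continuousWithinAt
  all_goals rw [interior_Ioi] at hx
  · exact (hasDerivAt_erlangExponent_left w hx.out.ne').hasDerivWithinAt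
  · exact mul_pos hx (add_two_add_exp_mul_sub_two_pos (div_pos hw hx))

lemma hasDerivAt_erlangExponent_right {x : ℝ} (w : ℝ) (hx : x ≠ 0) :
    HasDerivAt (erlangExponent x) (x - x * exp (w / x)) w := by
  refine (((hasDerivAt_id w).const_mul x).sub
    ((((hasDerivAt_id w).div_const x).exp.sub_const 1).const_mul (x ^ 2))).congr_deriv ?_
  simp only [id]
  field_simp

lemma erlangExponent_le_neg_sq_div_two {x w : ℝ} (hx : 0 < x) (hw : 0 ≤ w) :
    erlangExponent x w ≤ -(w ^ 2 / 2) := by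
  have h := mul_le_mul_of_nonneg_left (quadratic_le_exp_of_nonneg (div_nonneg hw hx.le))
    (sq_nonneg x)
  have : x ^ 2 * (1 + w / x + (w / x) ^ 2 / 2) = x ^ 2 + x * w + w ^ 2 / 2 := by
    field_simp
  rw [erlangExponent]
  linarith

noncomputable def erlangWeight (β x w : ℝ) : ℝ := exp (β * w + erlangExponent x w)

section erlangWeight

variable {β x : ℝ}

lemma erlangWeight_pos (w : ℝ) : 0 < erlangWeight β x w := exp_pos _

lemma erlangWeight_le (hx : 0 < x) {w : ℝ} (hw : 0 ≤ w) :
    erlangWeight β x w ≤ exp (β * w - w ^ 2 / 2) := by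
  unfold erlangWeight
  gcongr
  linarith [erlangExponent_le_neg_sq_div_two hx hw]

lemma continuous_erlangWeight : Continuous (erlangWeight β x) := by
  unfold erlangWeight erlangExponent
  fun_prop

lemma integrableOn_erlangWeight (hx : 0 < x) : IntegrableOn (erlangWeight β x) (Ioi 0) := by
  refine (integrable_exp_mul_sub_sq_div_two β).integrableOn.mono'
    continuous_erlangWeight.aestronglyMeasurable
    ((ae_restrict_iff' measurableSet_Ioi).2 (ae_of_all _ fun w hw ↦ ?_))
  rw [norm_of_nonneg (erlangWeight_pos w).le]
  exact erlangWeight_le hx hw.out.le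

lemma tendsto_erlangWeight_atTop (hx : 0 < x) : Tendsto (erlangWeight β x) atTop (nhds 0) :=
  tendsto_of_tendsto_of_tendsto_of_le_of_le' tendsto_const_nhds (tendsto_exp_mul_sub_sq_div_two β)
    (.of_forall fun w ↦ (erlangWeight_pos w).le)
    ((eventually_ge_atTop 0).mono fun _ hw ↦ erlangWeight_le hx hw)

lemma exp_div_mul_erlangWeight (w : ℝ) :
    exp (w / x) * erlangWeight β x w = erlangWeight (β + x⁻¹) x w := by
  rw [erlangWeight, erlangWeight, ← exp_add]
  congr 1
  ring

lemma hasDerivAt_erlangWeight (hx : x ≠ 0) (w : ℝ) :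
    HasDerivAt (erlangWeight β x) ((β + x - x * exp (w / x)) * erlangWeight β x w) w := by
  refine (((hasDerivAt_id w).const_mul β).add
    (hasDerivAt_erlangExponent_right w hx)).exp.congr_deriv ?_
  simp only [erlangWeight, id, Pi.add_apply]
  ring

lemma integrableOn_deriv_erlangWeight (hx : 0 < x) :
    IntegrableOn (fun w ↦ (β + x - x * exp (w / x)) * erlangWeight β x w) (Ioi 0) := by
  refine IntegrableOn.congr_fun
    (((integrableOn_erlangWeight (β := β) hx).const_mul (β + x)).sub
      ((integrableOn_erlangWeight (β := β + x⁻¹) hx).const_mul x))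
    (fun w _ ↦ ?_) measurableSet_Ioi
  simp only [Pi.sub_apply, ← exp_div_mul_erlangWeight]
  ring

lemma integral_deriv_erlangWeight (hx : 0 < x) :
    ∫ w in Ioi 0, (β + x - x * exp (w / x)) * erlangWeight β x w = -1 := by
  rw [integral_Ioi_of_hasDerivAt_of_tendsto continuous_erlangWeight.continuousWithinAt
    (fun w _ ↦ hasDerivAt_erlangWeight hx.ne' w) (integrableOn_deriv_erlangWeight hx)
    (tendsto_erlangWeight_atTop hx)]
  simp [erlangWeight, erlangExponent]

lemma strictMonoOn_integral_erlangWeight :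
    StrictMonoOn (fun x ↦ ∫ w in Ioi 0, erlangWeight β x w) (Ioi 0) := by
  intro x hx y hy hxy
  exact setIntegral_lt_setIntegral measurableSet_Ioi (by simp) (integrableOn_erlangWeight hx)
    (integrableOn_erlangWeight hy) fun w hw ↦
      exp_lt_exp.2 (add_lt_add_right (strictMonoOn_erlangExponent_left hw hx hy hxy) _)

end erlangWeight

lemma integral_erlangCInv_eq (β : ℝ) {x : ℝ} (hx : 0 < x) :
    ∫ t in Ioi 0, (1 + t) ^ (x ^ 2 + β * x) * (x ^ 2 * t / (1 + t)) * exp (-x ^ 2 * t)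
      = 1 + β * ∫ w in Ioi 0, erlangWeight β x w := by
  have hintegrand (w : ℝ) : (x⁻¹ * exp (w / x)) • ((1 + (exp (w / x) - 1)) ^ (x ^ 2 + β * x) *
      (x ^ 2 * (exp (w / x) - 1) / (1 + (exp (w / x) - 1))) * exp (-x ^ 2 * (exp (w / x) - 1)))
      = β * erlangWeight β x w - (β + x - x * exp (w / x)) * erlangWeight β x w := by
    have hweight : erlangWeight β x w =
        exp (w / x) ^ (x ^ 2 + β * x) * exp (-x ^ 2 * (exp (w / x) - 1)) := by
      rw [← exp_mul, ← exp_add, erlangWeight, erlangExponent]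
      congr 1
      field_simp
      ring
    rw [add_sub_cancel, smul_eq_mul, hweight]
    field_simp
    ring
  rw [← integral_comp_exp_div_sub_one_Ioi _ hx, setIntegral_congr_fun measurableSet_Ioi
    fun w _ ↦ hintegrand w, integral_sub ((integrableOn_erlangWeight hx).const_mul β)
    (integrableOn_deriv_erlangWeight hx), integral_const_mul, integral_deriv_erlangWeight hx]
  ring

open MeasureTheory in
theorem erlangCInv_strictMono (β : ℝ) (hβ : 0 < β) :
    StrictMonoOn
      (fun a : ℝ => ∫ t in Set.Ioi (0 : ℝ),
        (1 + t) ^ (a + β * Real.sqrt a) * (a * t / (1 + t)) * Real.exp (-a * t))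
      (Set.Ioi 0) := by
  have hrepr (a : ℝ) (ha : 0 < a) : ∫ t in Ioi 0,
      (1 + t) ^ (a + β * √a) * (a * t / (1 + t)) * exp (-a * t)
        = 1 + β * ∫ w in Ioi 0, erlangWeight β √a w := by
    simpa [sq_sqrt ha.le] using integral_erlangCInv_eq β (sqrt_pos.2 ha)
  intro a ha b hb hab
  simp only [hrepr a ha, hrepr b hb]
  have hlt := strictMonoOn_integral_erlangWeight (β := β) (sqrt_pos.2 ha) (sqrt_pos.2 hb)
    (sqrt_lt_sqrt ha.out.le hab)
  gcongr
end

section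
/- For β > 0, the limit as a → ∞ of C(a+β√a, a) equals (1 + β·Φ(β)/φ(β))^{−1}, where Φ and φ are the standard normal CDF and density. -/
/-!
Substituting `a = r ^ 2` and `t = x / r`, the integral becomes
`∫₀^∞ x / (1 + x/r) · exp (β x + s (log (1 + x/r) - x/r)) dx` with `s = r² + β r`.
As `log (1 + u) - u ~ -u² / 2` for `u → 0`, the integrand tends to `x exp (β x - x² / 2)`, and
the bounds `-u² / (u + 2) ≤ log (1 + u) - u ≤ -u² / (2 (1 + u))` dominate it, for large `r`, by
`x (exp (β x - x² / 8) + exp (-x))`. Dominated convergence gives the limit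
`∫₀^∞ x exp (β x - x² / 2) dx`, and completing the square turns this into
`1 + β e^{β²/2} ∫_{-∞}^β e^{-t²/2} dt = 1 + β Φ(β) / φ(β)`.
-/

open Real Set MeasureTheory Filter Topology

lemma log_one_add_le_of_nonneg {u : ℝ} (hu : 0 ≤ u) :
    log (1 + u) ≤ u - u ^ 2 / (2 * (1 + u)) := by
  have h := self_le_sinh_iff.2 (log_nonneg (by linarith : (1 : ℝ) ≤ 1 + u))
  rw [sinh_log (by positivity)] at h
  convert h using 1
  field_simp
  ring

lemma tendsto_log_one_add_sub_self_div_sq :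
    Tendsto (fun u : ℝ => (log (1 + u) - u) / u ^ 2) (𝓝[>] 0) (𝓝 (-1 / 2)) := by
  have lower : Tendsto (fun u : ℝ => -1 / (u + 2)) (𝓝[>] 0) (𝓝 (-1 / 2)) := by
    have h : ContinuousAt (fun u : ℝ => -1 / (u + 2)) 0 := by fun_prop (disch := norm_num)
    simpa using h.tendsto.mono_left nhdsWithin_le_nhds
  have upper : Tendsto (fun u : ℝ => -1 / (2 * (1 + u))) (𝓝[>] 0) (𝓝 (-1 / 2)) := by
    have h : ContinuousAt (fun u : ℝ => -1 / (2 * (1 + u))) 0 := by fun_prop (disch := norm_num)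
    simpa using h.tendsto.mono_left nhdsWithin_le_nhds
  refine tendsto_of_tendsto_of_tendsto_of_le_of_le' lower upper ?_ ?_ <;>
    filter_upwards [self_mem_nhdsWithin] with u (hu : 0 < u)
  · rw [le_div_iff₀ (by positivity)]
    have h := le_log_one_add_of_nonneg hu.le
    have : -1 / (u + 2) * u ^ 2 = 2 * u / (u + 2) - u := by field_simp; ring
    linarith
  · rw [div_le_iff₀ (by positivity)]
    have h := log_one_add_le_of_nonneg hu.le
    have : -1 / (2 * (1 + u)) * u ^ 2 = -(u ^ 2 / (2 * (1 + u))) := by ring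
    linarith

lemma integral_Ioi_comp_sub_right {E : Type*} [NormedAddCommGroup E] [NormedSpace ℝ E]
    (f : ℝ → E) (c d : ℝ) : ∫ x in Ioi c, f (x - d) = ∫ x in Ioi (c - d), f x := by
  rw [← integral_indicator measurableSet_Ioi, ← integral_indicator measurableSet_Ioi,
    ← integral_sub_right_eq_self (indicator (Ioi (c - d)) f) d]
  congr 1 with x
  simp [indicator_apply]

lemma integrable_mul_exp_mul_sub_sq_div {b : ℝ} (hb : 0 < b) (c : ℝ) :
    Integrable (fun x : ℝ => x * exp (c * x - x ^ 2 / b)) := by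
  have hg := integrable_exp_neg_mul_sq (inv_pos.2 hb)
  have h := (((integrable_mul_exp_neg_mul_sq (inv_pos.2 hb)).add
    (hg.const_mul (b * c / 2))).comp_sub_right (b * c / 2)).const_mul (exp (b * c ^ 2 / 4))
  refine h.congr (Eventually.of_forall fun x => ?_)
  simp only [Pi.add_apply]
  rw [← add_mul, sub_add_cancel, mul_left_comm, ← exp_add]
  congr 2
  field_simp
  ring

lemma integral_Ioi_mul_exp_neg_sq_div_two (c : ℝ) :
    ∫ y in Ioi c, y * exp (-y ^ 2 / 2) = exp (-c ^ 2 / 2) := by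
  have hderiv : ∀ y ∈ Ici c,
      HasDerivAt (fun y => -exp (-y ^ 2 / 2)) (y * exp (-y ^ 2 / 2)) y := by
    intro y _
    have h : HasDerivAt (fun y : ℝ => -y ^ 2 / 2) (-y) y :=
      ((hasDerivAt_pow 2 y).neg.div_const 2).congr_deriv (by ring)
    exact h.exp.neg.congr_deriv (by ring)
  have hint : IntegrableOn (fun y : ℝ => y * exp (-y ^ 2 / 2)) (Ioi c) := by
    refine (integrable_mul_exp_mul_sub_sq_div two_pos 0).integrableOn.congr_fun
      (fun y _ => ?_) measurableSet_Ioi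
    ring_nf
  have hlim : Tendsto (fun y : ℝ => -exp (-y ^ 2 / 2)) atTop (𝓝 0) := by
    have h : Tendsto (fun y : ℝ => -y ^ 2 / 2) atTop atBot :=
      (tendsto_neg_atTop_atBot.comp (tendsto_pow_atTop two_ne_zero)).atBot_div_const two_pos
    simpa using (tendsto_exp_atBot.comp h).neg
  rw [integral_Ioi_of_hasDerivAt_of_tendsto' hderiv hint hlim]
  ring

lemma integral_Ioi_mul_exp_mul_sub_sq_div_two (β : ℝ) :
    ∫ x in Ioi 0, x * exp (β * x - x ^ 2 / 2) =
      1 + β * exp (β ^ 2 / 2) * ∫ t in Iic β, exp (-t ^ 2 / 2) := by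
  have hg : Integrable (fun y : ℝ => exp (-y ^ 2 / 2)) := by
    simpa [neg_div, div_eq_inv_mul] using integrable_exp_neg_mul_sq (b := 1 / 2) (by norm_num)
  have hyg : Integrable (fun y : ℝ => y * exp (-y ^ 2 / 2)) := by
    simpa [neg_div] using integrable_mul_exp_mul_sub_sq_div two_pos 0
  have hcomplete_square : ∀ x : ℝ, x * exp (β * x - x ^ 2 / 2) =
      exp (β ^ 2 / 2) * ((x - β) * exp (-(x - β) ^ 2 / 2) + β * exp (-(x - β) ^ 2 / 2)) := by
    intro x
    rw [← add_mul, sub_add_cancel, mul_left_comm, ← exp_add]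
    congr 2
    ring
  have hshift := integral_Ioi_comp_sub_right
    (fun y => y * exp (-y ^ 2 / 2) + β * exp (-y ^ 2 / 2)) 0 β
  have hreflect := integral_comp_neg_Ioi (-β) (fun t => exp (-t ^ 2 / 2))
  simp only [neg_sq, neg_neg] at hshift hreflect
  simp_rw [hcomplete_square]
  rw [integral_const_mul, hshift, zero_sub,
    integral_add hyg.integrableOn (hg.const_mul β).integrableOn,
    integral_Ioi_mul_exp_neg_sq_div_two, integral_const_mul, hreflect, mul_add, ← exp_add,
    neg_sq, neg_div, add_neg_cancel, exp_zero]
  ring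

lemma integral_Ioi_mul_exp_mul_sub_sq_div_two_pos (β : ℝ) :
    0 < ∫ x in Ioi 0, x * exp (β * x - x ^ 2 / 2) := by
  have hpos : ∀ x ∈ Ioi (0 : ℝ), 0 < x * exp (β * x - x ^ 2 / 2) :=
    fun x (hx : 0 < x) => by positivity
  rw [setIntegral_pos_iff_support_of_nonneg_ae
    ((ae_restrict_iff' measurableSet_Ioi).2 (Eventually.of_forall fun x hx => (hpos x hx).le))
    (integrable_mul_exp_mul_sub_sq_div two_pos β).integrableOn]
  calc (0 : ENNReal) < volume (Ioi (0 : ℝ)) := by simp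
    _ ≤ volume (Function.support _ ∩ Ioi 0) :=
      measure_mono fun x hx => ⟨(hpos x hx).ne', hx⟩

noncomputable def scaledIntegrand (β r x : ℝ) : ℝ :=
  x / (1 + x / r) * exp (β * x + (r ^ 2 + β * r) * (log (1 + x / r) - x / r))

lemma integral_Ioi_erlang_eq_integral_scaledIntegrand (β : ℝ) {r : ℝ} (hr : 0 < r) :
    ∫ t in Ioi 0, (1 + t) ^ (r ^ 2 + β * r) * (r ^ 2 * t / (1 + t)) * exp (-r ^ 2 * t) =
      ∫ x in Ioi 0, scaledIntegrand β r x := by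
  have hscale := integral_comp_mul_left_Ioi
    (fun t => (1 + t) ^ (r ^ 2 + β * r) * (r ^ 2 * t / (1 + t)) * exp (-r ^ 2 * t)) 0
    (inv_pos.2 hr)
  rw [mul_zero, inv_inv] at hscale
  rw [← inv_smul_smul₀ hr.ne' (∫ t in Ioi 0, _), ← hscale, ← integral_smul]
  refine setIntegral_congr_fun measurableSet_Ioi fun x (hx : 0 < x) => ?_
  have hu : 0 < 1 + x / r := by positivity
  simp only [smul_eq_mul, scaledIntegrand, ← div_eq_inv_mul x r]
  have hexp : exp (log (1 + x / r) * (r ^ 2 + β * r)) * exp (-r ^ 2 * (x / r)) =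
      exp (β * x + (r ^ 2 + β * r) * (log (1 + x / r) - x / r)) := by
    rw [← exp_add]
    congr 1
    field_simp
    ring
  rw [rpow_def_of_pos hu, ← hexp]
  field_simp

lemma tendsto_scaledIntegrand (β : ℝ) {x : ℝ} (hx : 0 < x) :
    Tendsto (fun r => scaledIntegrand β r x) atTop (𝓝 (x * exp (β * x - x ^ 2 / 2))) := by
  have hu : Tendsto (fun r : ℝ => x / r) atTop (𝓝[>] 0) :=
    tendsto_nhdsWithin_iff.2 ⟨tendsto_const_nhds.div_atTop tendsto_id,
      by filter_upwards [eventually_gt_atTop 0] with r hr using div_pos hx hr⟩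
  have hquad : Tendsto (fun r : ℝ => (r ^ 2 + β * r) * (log (1 + x / r) - x / r)) atTop
      (𝓝 (-x ^ 2 / 2)) := by
    have h := (((tendsto_inv_atTop_zero.const_mul β).const_add 1).mul
      (tendsto_log_one_add_sub_self_div_sq.comp hu)).const_mul (x ^ 2)
    rw [show x ^ 2 * ((1 + β * 0) * (-1 / 2)) = -x ^ 2 / 2 by ring] at h
    refine h.congr' ?_
    filter_upwards [eventually_gt_atTop 0] with r hr
    simp only [Function.comp_apply]
    field_simp
  have hprefactor : Tendsto (fun r : ℝ => x / (1 + x / r)) atTop (𝓝 x) := by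
    have h := (tendsto_const_nhds (x := x)).div
      (tendsto_const_nhds.add (tendsto_nhdsWithin_iff.1 hu).1) (by norm_num : (1 : ℝ) + 0 ≠ 0)
    rwa [add_zero, div_one] at h
  simpa [scaledIntegrand, sub_eq_add_neg, neg_div] using
    hprefactor.mul (hquad.const_add (β * x)).rexp

lemma mul_log_one_add_div_sub_le {r s x : ℝ} (hr : 0 < r) (hs : r ^ 2 / 2 ≤ s) (hx : 0 ≤ x) :
    s * (log (1 + x / r) - x / r) ≤ -(x ^ 2 / (4 * (1 + x / r))) := by
  have hu : 0 ≤ x / r := by positivity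
  have hlog : log (1 + x / r) - x / r ≤ -((x / r) ^ 2 / (2 * (1 + x / r))) := by
    linarith [log_one_add_le_of_nonneg hu]
  have hlog_nonpos : -((x / r) ^ 2 / (2 * (1 + x / r))) ≤ 0 := by
    have : 0 ≤ (x / r) ^ 2 / (2 * (1 + x / r)) := by positivity
    linarith
  calc s * (log (1 + x / r) - x / r) ≤ r ^ 2 / 2 * (log (1 + x / r) - x / r) :=
        mul_le_mul_of_nonpos_right hs (hlog.trans hlog_nonpos)
    _ ≤ r ^ 2 / 2 * -((x / r) ^ 2 / (2 * (1 + x / r))) :=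
        mul_le_mul_of_nonneg_left hlog (by positivity)
    _ = -(x ^ 2 / (4 * (1 + x / r))) := by field_simp; ring

lemma norm_scaledIntegrand_le {β r x : ℝ} (hr : 8 * (|β| + 1) ≤ r) (hx : 0 < x) :
    ‖scaledIntegrand β r x‖ ≤ x * (exp (β * x - x ^ 2 / 8) + exp (-x)) := by
  have hr0 : 0 < r := by linarith [abs_nonneg β]
  have hs : r ^ 2 / 2 ≤ r ^ 2 + β * r := by nlinarith [neg_abs_le β]
  have hbound := mul_log_one_add_div_sub_le hr0 hs hx.le
  have hexp : exp (β * x + (r ^ 2 + β * r) * (log (1 + x / r) - x / r)) ≤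
      exp (β * x - x ^ 2 / 8) + exp (-x) := by
    rcases le_or_gt x r with hxr | hxr
    · have : x ^ 2 / 8 ≤ x ^ 2 / (4 * (1 + x / r)) := by
        gcongr
        linarith [(div_le_one hr0).2 hxr]
      have := exp_le_exp.2 (by linarith :
        β * x + (r ^ 2 + β * r) * (log (1 + x / r) - x / r) ≤ β * x - x ^ 2 / 8)
      linarith [exp_pos (-x)]
    · have : (|β| + 1) * x ≤ x ^ 2 / (4 * (1 + x / r)) := by
        rw [le_div_iff₀ (by positivity)]
        field_simp
        nlinarith
      have := exp_le_exp.2 (by nlinarith [le_abs_self β] :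
        β * x + (r ^ 2 + β * r) * (log (1 + x / r) - x / r) ≤ -x)
      linarith [exp_pos (β * x - x ^ 2 / 8)]
  have hprefactor : x / (1 + x / r) ≤ x :=
    div_le_self hx.le (le_add_of_nonneg_right (by positivity))
  rw [scaledIntegrand, norm_of_nonneg (by positivity)]
  exact mul_le_mul hprefactor hexp (by positivity) hx.le

lemma tendsto_integral_scaledIntegrand (β : ℝ) :
    Tendsto (fun r => ∫ x in Ioi 0, scaledIntegrand β r x) atTop
      (𝓝 (∫ x in Ioi 0, x * exp (β * x - x ^ 2 / 2))) := by
  refine tendsto_integral_filter_of_dominated_convergence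
    (fun x => x * (exp (β * x - x ^ 2 / 8) + exp (-x))) ?_ ?_ ?_ ?_
  · exact Eventually.of_forall fun r => by
      unfold scaledIntegrand
      exact (by fun_prop : Measurable _).aestronglyMeasurable
  · filter_upwards [eventually_ge_atTop (8 * (|β| + 1))] with r hr
    filter_upwards [ae_restrict_mem measurableSet_Ioi] with x hx
    exact norm_scaledIntegrand_le hr hx
  · simp_rw [mul_add]
    exact (integrable_mul_exp_mul_sub_sq_div (by norm_num) β).integrableOn.add
      (by simpa using integrableOn_rpow_mul_exp_neg_rpow (s := 1) (p := 1) (by norm_num) one_pos)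
  · filter_upwards [ae_restrict_mem measurableSet_Ioi] with x hx
    exact tendsto_scaledIntegrand β hx

lemma tendsto_of_tendsto_comp_sq {α : Type*} {f : ℝ → α} {l : Filter α}
    (h : Tendsto (fun r => f (r ^ 2)) atTop l) : Tendsto f atTop l :=
  (h.comp tendsto_sqrt_atTop).congr' <| by
    filter_upwards [eventually_ge_atTop 0] with a ha
    simp [sq_sqrt ha]

open MeasureTheory Filter in
theorem halfin_whitt_limit_general (β : ℝ) :
    Tendsto
      (fun a : ℝ => (∫ t in Set.Ioi (0 : ℝ),
        (1 + t) ^ (a + β * Real.sqrt a) * (a * t / (1 + t)) * Real.exp (-a * t))⁻¹)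
      atTop
      (nhds ((1 + β *
        (∫ t in Set.Iic β, Real.exp (-t ^ 2 / 2) / Real.sqrt (2 * Real.pi)) /
          (Real.exp (-β ^ 2 / 2) / Real.sqrt (2 * Real.pi)))⁻¹)) := by
  have hratio : (∫ t in Iic β, exp (-t ^ 2 / 2) / √(2 * π)) / (exp (-β ^ 2 / 2) / √(2 * π)) =
      exp (β ^ 2 / 2) * ∫ t in Iic β, exp (-t ^ 2 / 2) := by
    rw [integral_div, div_div_div_cancel_right₀ (by positivity), div_eq_mul_inv, ← exp_neg,
      neg_div, neg_neg, mul_comm]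
  have hlim := (tendsto_integral_scaledIntegrand β).inv₀
    (integral_Ioi_mul_exp_mul_sub_sq_div_two_pos β).ne'
  rw [integral_Ioi_mul_exp_mul_sub_sq_div_two, mul_assoc, ← hratio, ← mul_div_assoc] at hlim
  refine tendsto_of_tendsto_comp_sq (hlim.congr' ?_)
  filter_upwards [eventually_gt_atTop 0] with r hr
  rw [sqrt_sq hr.le, integral_Ioi_erlang_eq_integral_scaledIntegrand β hr]

open MeasureTheory Filter in
theorem halfin_whitt_limit (β : ℝ) (hβ : 0 < β) :
    Tendsto
      (fun a : ℝ => (∫ t in Set.Ioi (0 : ℝ),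
        (1 + t) ^ (a + β * Real.sqrt a) * (a * t / (1 + t)) * Real.exp (-a * t))⁻¹)
      atTop
      (nhds ((1 + β *
        (∫ t in Set.Iic β, Real.exp (-t ^ 2 / 2) / Real.sqrt (2 * Real.pi)) /
          (Real.exp (-β ^ 2 / 2) / Real.sqrt (2 * Real.pi)))⁻¹)) :=
  halfin_whitt_limit_general β
end

section
/- For every β > 0 and every a > 0, C(a+β√a, a) > (1 + β·Φ(β)/φ(β))^{−1}, i.e., the Halfin–Whitt limit C_*(β) is a strict lower bound for the Erlang C formula along the square-root staffing curve. -/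
/-!
Writing `a t / (1 + t) = a - a / (1 + t)` and integrating by parts gives
`C(s, a)⁻¹ = 1 + (s - a) ∫₀^∞ (1 + t)^(s - 1) e^(-a t) dt`. The substitution `1 + t = eˣ` turns
the last integral into `∫₀^∞ exp(s x - a (eˣ - 1)) dx`, and `eˣ - 1 > x + x² / 2` bounds its
integrand strictly by the Gaussian `exp((s - a) x - a x² / 2)`. For `s = a + β √a` the
substitution `u = β - √a x` identifies `√a` times the Gaussian integral with
`Φ(β) / φ(β) = e^(β² / 2) ∫_{-∞}^β e^(-u² / 2) du`.
-/

open MeasureTheory Set Filter Real Asymptotics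

theorem setIntegral_lt_setIntegral_of_forall_lt {X : Type*} [MeasurableSpace X] {μ : Measure X}
    {s : Set X} {f g : X → ℝ} (hs : MeasurableSet s) (hμs : μ s ≠ 0)
    (hf : IntegrableOn f s μ) (hg : IntegrableOn g s μ) (hlt : ∀ x ∈ s, f x < g x) :
    ∫ x in s, f x ∂μ < ∫ x in s, g x ∂μ := by
  rw [← sub_pos, ← integral_sub hg hf,
    setIntegral_pos_iff_support_of_nonneg_ae (f := fun x ↦ g x - f x) _ (hg.sub hf),
    inter_eq_right.mpr fun x hx ↦ Function.mem_support.mpr (sub_pos.mpr (hlt x hx)).ne']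
  · exact pos_iff_ne_zero.mpr hμs
  · filter_upwards [ae_restrict_mem hs] with x hx using sub_nonneg.mpr (hlt x hx).le

theorem quadratic_lt_exp_of_pos {x : ℝ} (hx : 0 < x) : 1 + x + x ^ 2 / 2 < exp x :=
  calc 1 + x + x ^ 2 / 2 < ∑ i ∈ Finset.range 4, x ^ i / i.factorial := by
        simp only [Finset.sum_range_succ, Finset.range_zero, Finset.sum_empty, Nat.factorial]
        norm_num
        positivity
    _ ≤ exp x := sum_le_exp_of_nonneg hx.le 4

theorem integral_Ioi_comp_exp_sub_one (g : ℝ → ℝ) :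
    ∫ x in Ioi 0, exp x * g (exp x - 1) = ∫ t in Ioi 0, g t := by
  have himage : (fun x ↦ exp x - 1) '' Ioi 0 = Ioi 0 := by
    rw [← image_image (· - 1) exp, image_exp_Ioi, exp_zero, image_sub_const_Ioi, sub_self]
  conv_rhs => rw [← himage]
  rw [integral_image_eq_integral_abs_deriv_smul measurableSet_Ioi
    (fun x _ ↦ ((hasDerivAt_exp x).sub_const 1).hasDerivWithinAt)
    (fun x _ y _ h ↦ exp_injective (sub_left_injective h))]
  simp only [abs_exp, smul_eq_mul]

theorem mul_integral_Ioi_comp_sub_mul (g : ℝ → ℝ) (β : ℝ) {r : ℝ} (hr : 0 < r) :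
    r * ∫ x in Ioi 0, g (β - r * x) = ∫ t in Iic β, g t := by
  have himage : (fun x ↦ β - r * x) '' Ioi 0 = Iio β := by
    ext t
    refine ⟨?_, fun ht ↦ ⟨(β - t) / r, div_pos (sub_pos.mpr ht) hr, by field_simp; ring⟩⟩
    rintro ⟨x, hx, rfl⟩
    simpa using mul_pos hr hx
  have hderiv : ∀ x ∈ Ioi (0 : ℝ), HasDerivWithinAt (fun x ↦ β - r * x) (-r) (Ioi 0) x :=
    fun x _ ↦ by simpa using (((hasDerivAt_id x).const_mul r).const_sub β).hasDerivWithinAt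
  rw [integral_Iic_eq_integral_Iio, ← himage, integral_image_eq_integral_abs_deriv_smul
    measurableSet_Ioi hderiv (fun x _ y _ h ↦ by simpa [hr.ne'] using h), ← integral_const_mul]
  simp [abs_of_pos hr]

theorem integrable_exp_mul_sub_mul_sq_div_two (b : ℝ) {a : ℝ} (ha : 0 < a) :
    Integrable fun x ↦ exp (b * x - a * x ^ 2 / 2) := by
  refine (((integrable_exp_neg_mul_sq (half_pos ha)).comp_sub_right (b / a)).const_mul
    (exp (b ^ 2 / (2 * a)))).congr (Eventually.of_forall fun x ↦ ?_)
  simp only [← exp_add]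
  congr 1
  field_simp
  ring

theorem one_add_rpow_mul_exp_neg_isBigO (c : ℝ) {a : ℝ} (ha : 0 < a) :
    (fun t ↦ (1 + t) ^ c * exp (-(a * t))) =O[atTop] fun t ↦ exp (-(a / 2) * t) := by
  have h := ((isLittleO_rpow_exp_pos_mul_atTop c (half_pos ha)).comp_tendsto
    (tendsto_atTop_add_const_left atTop 1 tendsto_id)).isBigO.mul
    (isBigO_refl (fun t ↦ exp (-(a * t))) atTop)
  refine h.trans (IsBigO.of_bound (exp (a / 2)) (Eventually.of_forall fun t ↦ ?_))
  simp only [Function.comp_apply, id, norm_eq_abs, abs_exp, ← exp_add]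
  exact le_of_eq (by ring_nf)

theorem integrableOn_one_add_rpow_mul_exp_neg (c : ℝ) {a : ℝ} (ha : 0 < a) :
    IntegrableOn (fun t ↦ (1 + t) ^ c * exp (-(a * t))) (Ioi 0) :=
  integrable_of_isBigO_exp_neg (half_pos ha)
    (fun t ht ↦ ((continuousAt_const.add continuousAt_id).rpow_const
      (Or.inl (by linarith [mem_Ici.mp ht] : 1 + t ≠ 0))).mul (by fun_prop) |>.continuousWithinAt)
    (one_add_rpow_mul_exp_neg_isBigO c ha)

theorem tendsto_one_add_rpow_mul_exp_neg (c : ℝ) {a : ℝ} (ha : 0 < a) :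
    Tendsto (fun t ↦ (1 + t) ^ c * exp (-(a * t))) atTop (nhds 0) :=
  (one_add_rpow_mul_exp_neg_isBigO c ha).trans_tendsto <|
    tendsto_exp_atBot.comp (tendsto_id.const_mul_atTop_of_neg (by linarith))

theorem hasDerivAt_one_add_rpow_mul_exp_neg (s a : ℝ) {t : ℝ} (ht : 0 < 1 + t) :
    HasDerivAt (fun t ↦ (1 + t) ^ s * exp (-(a * t)))
      (s * ((1 + t) ^ (s - 1) * exp (-(a * t))) - a * ((1 + t) ^ s * exp (-(a * t)))) t := by
  have hpow : HasDerivAt (fun t ↦ (1 + t) ^ s) (1 * s * (1 + t) ^ (s - 1)) t :=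
    ((hasDerivAt_id t).const_add 1).rpow_const (Or.inl ht.ne')
  have hexp : HasDerivAt (fun t ↦ exp (-(a * t))) (exp (-(a * t)) * -(a * 1)) t :=
    ((hasDerivAt_id t).const_mul a).neg.exp
  exact (hpow.mul hexp).congr_deriv (by ring)

theorem mul_integral_one_add_rpow_mul_exp_neg (s : ℝ) {a : ℝ} (ha : 0 < a) :
    a * ∫ t in Ioi 0, (1 + t) ^ s * exp (-(a * t)) =
      1 + s * ∫ t in Ioi 0, (1 + t) ^ (s - 1) * exp (-(a * t)) := by
  have hs := integrableOn_one_add_rpow_mul_exp_neg s ha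
  have hs₁ := integrableOn_one_add_rpow_mul_exp_neg (s - 1) ha
  have hftc := integral_Ioi_of_hasDerivAt_of_tendsto
    (f := fun t ↦ (1 + t) ^ s * exp (-(a * t)))
    (((continuousAt_const.add continuousAt_id).rpow_const
      (Or.inl (by norm_num))).mul (by fun_prop)).continuousWithinAt
    (fun t ht ↦ hasDerivAt_one_add_rpow_mul_exp_neg s a (by linarith [mem_Ioi.mp ht]))
    ((hs₁.const_mul s).sub (hs.const_mul a)) (tendsto_one_add_rpow_mul_exp_neg s ha)
  rw [integral_sub (hs₁.const_mul s) (hs.const_mul a), integral_const_mul,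
    integral_const_mul] at hftc
  norm_num at hftc
  linarith

theorem integral_erlangC_inv_eq (s : ℝ) {a : ℝ} (ha : 0 < a) :
    ∫ t in Ioi 0, (1 + t) ^ s * (a * t / (1 + t)) * exp (-a * t) =
      1 + (s - a) * ∫ t in Ioi 0, (1 + t) ^ (s - 1) * exp (-(a * t)) := by
  have hs := integrableOn_one_add_rpow_mul_exp_neg s ha
  have hs₁ := integrableOn_one_add_rpow_mul_exp_neg (s - 1) ha
  have hsplit : ∀ t ∈ Ioi (0 : ℝ), (1 + t) ^ s * (a * t / (1 + t)) * exp (-a * t) =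
      a * ((1 + t) ^ s * exp (-(a * t))) - a * ((1 + t) ^ (s - 1) * exp (-(a * t))) := by
    intro t ht
    have h1t : 0 < 1 + t := by linarith [mem_Ioi.mp ht]
    rw [rpow_sub_one h1t.ne', neg_mul]
    field_simp
    ring
  rw [setIntegral_congr_fun measurableSet_Ioi hsplit, integral_sub (hs.const_mul a)
    (hs₁.const_mul a), integral_const_mul, integral_const_mul,
    mul_integral_one_add_rpow_mul_exp_neg s ha]
  ring

theorem integral_one_add_rpow_mul_exp_neg_lt (c : ℝ) {a : ℝ} (ha : 0 < a) :
    ∫ t in Ioi 0, (1 + t) ^ c * exp (-(a * t)) <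
      ∫ x in Ioi 0, exp ((c + 1 - a) * x - a * x ^ 2 / 2) := by
  have hsubst : ∀ x : ℝ, exp x * ((1 + (exp x - 1)) ^ c * exp (-(a * (exp x - 1)))) =
      exp ((c + 1) * x - a * (exp x - 1)) := by
    intro x
    rw [add_sub_cancel, ← exp_mul, ← exp_add, ← exp_add]
    ring_nf
  have hlt : ∀ x ∈ Ioi (0 : ℝ),
      exp ((c + 1) * x - a * (exp x - 1)) < exp ((c + 1 - a) * x - a * x ^ 2 / 2) := by
    intro x hx
    have := mul_lt_mul_of_pos_left (quadratic_lt_exp_of_pos hx) ha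
    exact exp_lt_exp.mpr (by linarith)
  have hgauss : IntegrableOn (fun x ↦ exp ((c + 1 - a) * x - a * x ^ 2 / 2)) (Ioi 0) :=
    (integrable_exp_mul_sub_mul_sq_div_two _ ha).integrableOn
  rw [← integral_Ioi_comp_exp_sub_one]
  simp only [hsubst]
  refine setIntegral_lt_setIntegral_of_forall_lt measurableSet_Ioi (by simp) ?_ hgauss hlt
  refine hgauss.mono' (by fun_prop) ?_
  filter_upwards [ae_restrict_mem measurableSet_Ioi] with x hx
  rw [norm_of_nonneg (exp_pos _).le]
  exact (hlt x hx).le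

theorem mul_integral_exp_mul_sub_sq_div_two (β : ℝ) {r : ℝ} (hr : 0 < r) :
    r * ∫ x in Ioi 0, exp (β * r * x - r ^ 2 * x ^ 2 / 2) =
      exp (β ^ 2 / 2) * ∫ t in Iic β, exp (-t ^ 2 / 2) := by
  rw [← mul_integral_Ioi_comp_sub_mul _ β hr, mul_left_comm, ← integral_const_mul (exp _)]
  refine congrArg (r * ·) (integral_congr_ae (Eventually.of_forall fun x ↦ ?_))
  simp only [← exp_add]
  ring_nf

theorem integral_gaussian_Iic_div_gaussian_eq (β : ℝ) :
    (∫ t in Iic β, exp (-t ^ 2 / 2) / √(2 * π)) / (exp (-β ^ 2 / 2) / √(2 * π)) =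
      exp (β ^ 2 / 2) * ∫ t in Iic β, exp (-t ^ 2 / 2) := by
  have hπ : 0 < √(2 * π) := by positivity
  rw [integral_div, div_div_div_cancel_right₀ hπ.ne', div_eq_inv_mul, ← exp_neg, neg_div, neg_neg]

theorem sqrt_mul_integral_one_add_rpow_mul_exp_neg_lt (β : ℝ) {a : ℝ} (ha : 0 < a) :
    √a * ∫ t in Ioi 0, (1 + t) ^ (a + β * √a - 1) * exp (-(a * t)) <
      exp (β ^ 2 / 2) * ∫ t in Iic β, exp (-t ^ 2 / 2) := by
  have hr : 0 < √a := sqrt_pos.mpr ha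
  calc √a * ∫ t in Ioi 0, (1 + t) ^ (a + β * √a - 1) * exp (-(a * t))
      < √a * ∫ x in Ioi 0, exp ((a + β * √a - 1 + 1 - a) * x - a * x ^ 2 / 2) :=
        mul_lt_mul_of_pos_left (integral_one_add_rpow_mul_exp_neg_lt _ ha) hr
    _ = √a * ∫ x in Ioi 0, exp (β * √a * x - √a ^ 2 * x ^ 2 / 2) := by
        rw [sq_sqrt ha.le]
        ring_nf
    _ = exp (β ^ 2 / 2) * ∫ t in Iic β, exp (-t ^ 2 / 2) :=
        mul_integral_exp_mul_sub_sq_div_two β hr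

open MeasureTheory in
theorem erlangC_gt_halfin_whitt (β a : ℝ) (hβ : 0 < β) (ha : 0 < a) :
    (∫ t in Set.Ioi (0 : ℝ),
        (1 + t) ^ (a + β * Real.sqrt a) * (a * t / (1 + t)) * Real.exp (-a * t))⁻¹ >
      (1 + β *
        (∫ t in Set.Iic β, Real.exp (-t ^ 2 / 2) / Real.sqrt (2 * Real.pi)) /
          (Real.exp (-β ^ 2 / 2) / Real.sqrt (2 * Real.pi)))⁻¹ := by
  have hI : 0 ≤ ∫ t in Ioi 0, (1 + t) ^ (a + β * √a - 1) * exp (-(a * t)) :=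
    setIntegral_nonneg measurableSet_Ioi fun t ht ↦
      mul_nonneg (rpow_nonneg (by linarith [mem_Ioi.mp ht]) _) (exp_pos _).le
  rw [gt_iff_lt, integral_erlangC_inv_eq _ ha, add_sub_cancel_left, mul_div_assoc,
    integral_gaussian_Iic_div_gaussian_eq, mul_assoc]
  refine inv_strictAnti₀ (by positivity) ?_
  gcongr 1 + β * ?_
  exact sqrt_mul_integral_one_add_rpow_mul_exp_neg_lt β ha
end
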